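/- Let a, b, c be real numbers with 0 ≤ a ≤ b, b > 0, and c > √(a² + b²). Then S(a,b,c) < 2π²(a + b + c). -/
import Mathlib


open Real

/-- Complete elliptic integral of the first kind. -/
noncomputable def completeEllipticK (k : ℝ) : ℝ :=
  ∫ θ in (0:ℝ)..(π/2), 1 / Real.sqrt (1 - k^2 * Real.sin θ ^ 2)

/-- Complete elliptic integral of the second kind. -/
noncomputable def completeEllipticE (k : ℝ) : ℝ :=
  ∫ θ in (0:ℝ)..(π/2), Real.sqrt (1 - k^2 * Real.sin θ ^ 2)

/-- The area `S(a,b,c)` of the generalized Lawson surface `T_{a,b,c}`. -/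
noncomputable def lawsonArea (a b c : ℝ) : ℝ :=
  4 * π / Real.sqrt (c^2 - a^2) *
    (2 * (c^2 - a^2) * completeEllipticE (Real.sqrt ((b^2 - a^2) / (c^2 - a^2)))
      - (c^2 - a^2 - b^2) * completeEllipticK (Real.sqrt ((b^2 - a^2) / (c^2 - a^2))))

lemma completeEllipticE_le (k : ℝ) : completeEllipticE k ≤ π / 2 := by
  have h : completeEllipticE k ≤ ∫ _θ in (0:ℝ)..(π/2), (1:ℝ) := by
    apply intervalIntegral.integral_mono_on (by positivity)
    · apply Continuous.intervalIntegrable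
      continuity
    · exact intervalIntegrable_const
    · intro x _
      have h0 : 0 ≤ k^2 * Real.sin x ^ 2 := by positivity
      have : 1 - k^2 * Real.sin x ^ 2 ≤ 1 := by linarith
      calc Real.sqrt (1 - k^2 * Real.sin x ^ 2) ≤ Real.sqrt 1 := Real.sqrt_le_sqrt this
        _ = 1 := Real.sqrt_one
  simpa using h

lemma le_completeEllipticK {k : ℝ} (hk : k^2 < 1) : π / 2 ≤ completeEllipticK k := by
  have hpos : ∀ x : ℝ, 0 < 1 - k^2 * Real.sin x ^ 2 := by
    intro x
    nlinarith [Real.sin_sq_le_one x, sq_nonneg k]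
  have hcont : Continuous fun θ : ℝ => 1 / Real.sqrt (1 - k^2 * Real.sin θ ^ 2) := by
    apply Continuous.div continuous_const
    · continuity
    · intro x
      exact ne_of_gt (Real.sqrt_pos.mpr (hpos x))
  have h : (∫ _θ in (0:ℝ)..(π/2), (1:ℝ)) ≤ completeEllipticK k := by
    apply intervalIntegral.integral_mono_on (by positivity) intervalIntegrable_const
      (hcont.intervalIntegrable _ _)
    intro x _
    rw [le_div_iff₀ (Real.sqrt_pos.mpr (hpos x)), one_mul]
    have h0 : 0 ≤ k^2 * Real.sin x ^ 2 := by positivity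
    calc Real.sqrt (1 - k^2 * Real.sin x ^ 2) ≤ Real.sqrt 1 :=
          Real.sqrt_le_sqrt (by linarith)
      _ = 1 := Real.sqrt_one
  simpa using h

/-- For `0 ≤ a ≤ b`, `b > 0`, `c > √(a²+b²)`, one has `S(a,b,c) < 2π²(a+b+c)`. -/
theorem lawsonArea_lt (a b c : ℝ) (ha : 0 ≤ a) (hab : a ≤ b) (hb : 0 < b)
    (hc : Real.sqrt (a^2 + b^2) < c) :
    lawsonArea a b c < 2 * π^2 * (a + b + c) := by
  have hc0 : 0 < c := lt_of_le_of_lt (Real.sqrt_nonneg _) hc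
  have hc2 : a^2 + b^2 < c^2 := by
    nlinarith [Real.sq_sqrt (by positivity : (0:ℝ) ≤ a^2 + b^2), Real.sqrt_nonneg (a^2+b^2)]
  have hApos : 0 < c^2 - a^2 := by nlinarith
  have hBpos : 0 < c^2 - a^2 - b^2 := by nlinarith
  set s := Real.sqrt (c^2 - a^2) with hsdef
  have hs : 0 < s := Real.sqrt_pos.mpr hApos
  have hs2 : s^2 = c^2 - a^2 := Real.sq_sqrt hApos.le
  have hsb : b < s := by nlinarith [hs2, hs, hb.le]
  have hsc : s ≤ c := by nlinarith [hs2, hs.le, hc0.le]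
  set k := Real.sqrt ((b^2 - a^2)/(c^2 - a^2)) with hkdef
  have hk2 : k^2 = (b^2-a^2)/(c^2-a^2) :=
    Real.sq_sqrt (div_nonneg (by nlinarith) hApos.le)
  have hk1 : k^2 < 1 := by rw [hk2, div_lt_one hApos]; nlinarith
  have hE := completeEllipticE_le k
  have hK := le_completeEllipticK hk1
  have hπ := Real.pi_pos
  have hinner : 2*(c^2-a^2)*completeEllipticE k - (c^2-a^2-b^2)*completeEllipticK k
      ≤ (π/2) * (c^2 - a^2 + b^2) := by
    nlinarith [mul_le_mul_of_nonneg_left hE (by positivity : (0:ℝ) ≤ 2*(c^2-a^2)),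
      mul_le_mul_of_nonneg_left hK hBpos.le]
  have hmain : lawsonArea a b c ≤ 4*π/s * ((π/2) * (c^2 - a^2 + b^2)) := by
    unfold lawsonArea
    rw [← hsdef, ← hkdef]
    exact mul_le_mul_of_nonneg_left hinner (by positivity)
  have key : c^2 - a^2 + b^2 < (a+b+c)*s := by
    nlinarith [mul_lt_mul_of_pos_left hsb hb, mul_le_mul_of_nonneg_left hsc hs.le,
      mul_nonneg ha hs.le]
  calc lawsonArea a b c ≤ 4*π/s * ((π/2) * (c^2 - a^2 + b^2)) := hmain
    _ < 4*π/s * ((π/2) * ((a+b+c)*s)) := by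
        apply mul_lt_mul_of_pos_left _ (by positivity)
        exact mul_lt_mul_of_pos_left key (by positivity)
    _ = 2 * π^2 * (a+b+c) := by
        field_simp
        ring
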